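/- The language A = { a b^{i₁} a b^{i₂} ⋯ a b^{i_k} : k ≥ 1, 0 ≤ i₁ ≤ i₂ ≤ ⋯ ≤ i_k } over the alphabet {a,b} has intermediate growth: for all real α, β > 1 there exists N such that for all n > N, the number f(n) of words in A of length n satisfies n^α < f(n) < β^n. -/

import Mathlib

/-- The two-letter alphabet `{a, b}`. -/
inductive AB : Type
  | a : AB
  | b : AB
deriving DecidableEq

/-- The language `A = { a b^{i₁} a b^{i₂} ⋯ a b^{i_k} : k ≥ 1, 0 ≤ i₁ ≤ ⋯ ≤ i_k }`:
a word lies in `A` iff it is the concatenation of `k ≥ 1` blocks `a b^{i_j}` with the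
exponents `i_j` forming a nondecreasing sequence of nonnegative integers. -/
def langA : Set (List AB) :=
  { w | ∃ l : List ℕ, l ≠ [] ∧ l.Pairwise (· ≤ ·) ∧
      w = (l.map (fun i => AB.a :: List.replicate i AB.b)).flatten }

/-- `growthA n` is the number of words of `A` of length exactly `n`. -/
noncomputable def growthA (n : ℕ) : ℕ :=
  Nat.card { w : List AB // w ∈ langA ∧ w.length = n }

/-! Reading the block `a b^i` as the part `i + 1` identifies the words of `A` of length `n ≥ 1`
with the partitions of `n`, so `f(n)` is the partition number `p(n)`.

Subsets of `{2, …, m + 1}` padded with ones are distinct partitions of `n` as soon as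
`(m + 1)(m + 2) ≤ 2n`, so `p(n) ≥ 2 ^ (√n - 1)`. Conversely, a partition of `n` is determined by
the multiplicities of its parts `≤ k` and by its at most `n / (k + 1)` parts `> k`; for `k = √n`
this gives `p(n) ≤ (n + 1) ^ (2√n)`. As `log n = o(√n)`, the lower bound beats every power of `n`
and the upper bound is beaten by every exponential. -/

open Filter Real

def blocks (l : List ℕ) : List AB :=
  (l.map fun i => AB.a :: List.replicate i AB.b).flatten

lemma blocks_cons (i : ℕ) (l : List ℕ) :
    blocks (i :: l) = AB.a :: (List.replicate i AB.b ++ blocks l) := by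
  simp [blocks]

lemma length_blocks (l : List ℕ) : (blocks l).length = l.sum + l.length := by
  induction l with
  | nil => rfl
  | cons i l ih => simp [blocks_cons, ih]; omega

lemma blocks_eq_intercalate (l : List ℕ) :
    blocks l = [AB.a].intercalate ([] :: l.map (List.replicate · AB.b)) := by
  induction l with
  | nil => rfl
  | cons i l ih =>
    rw [blocks_cons, ih, List.map_cons, List.intercalate_cons_cons, List.nil_append]
    cases l with
    | nil => simp
    | cons j l => simp [List.intercalate_cons_cons]

lemma blocks_injective : Function.Injective blocks := by
  intro l₁ l₂ h
  have hsplit : ∀ l, (blocks l).splitOn AB.a = [] :: l.map (List.replicate · AB.b) := by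
    intro l
    rw [blocks_eq_intercalate]
    exact List.splitOn_intercalate _ (by simp [List.mem_replicate]) (List.cons_ne_nil _ _)
  have hruns := congrArg (fun w => (w.splitOn AB.a).tail) h
  simp only [hsplit, List.tail_cons] at hruns
  exact List.map_injective_iff.mpr (List.replicate_left_injective AB.b) hruns

lemma List.sum_map_add_one (l : List ℕ) : (l.map (· + 1)).sum = l.sum + l.length := by
  simp [List.sum_map_add]

namespace Nat.Partition

variable {n : ℕ}

def toWord (p : n.Partition) : List AB :=
  blocks ((p.parts.sort).map (· - 1))

lemma map_add_one_map_sub_one_sort (p : n.Partition) :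
    ((p.parts.sort).map (· - 1)).map (· + 1) = p.parts.sort := by
  rw [List.map_map]
  exact (List.map_congr_left fun x hx =>
    Nat.sub_add_cancel (p.parts_pos ((Multiset.mem_sort _).mp hx))).trans (List.map_id _)

lemma length_toWord (p : n.Partition) : p.toWord.length = n := by
  have h := congrArg List.sum (map_add_one_map_sub_one_sort p)
  rw [List.sum_map_add_one] at h
  rw [toWord, length_blocks, h, ← Multiset.sum_coe, Multiset.sort_eq, p.parts_sum]

lemma toWord_mem_langA (hn : n ≠ 0) (p : n.Partition) : p.toWord ∈ langA := by
  refine ⟨(p.parts.sort).map (· - 1), ?_,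
    (Multiset.pairwise_sort _ _).map _ fun a b hab => Nat.sub_le_sub_right hab 1, rfl⟩
  intro h
  simp [← length_toWord p, toWord, h, blocks] at hn

lemma toWord_injective : Function.Injective (toWord (n := n)) := by
  intro p q h
  have hsort := congrArg (List.map (· + 1)) (blocks_injective h)
  rw [map_add_one_map_sub_one_sort, map_add_one_map_sub_one_sort] at hsort
  ext1
  rw [← Multiset.sort_eq p.parts (· ≤ ·), hsort, Multiset.sort_eq]

lemma exists_toWord_eq {w : List AB} (hw : w ∈ langA) :
    ∃ p : w.length.Partition, p.toWord = w := by
  obtain ⟨l, -, hl, rfl⟩ := hw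
  change ∃ p : (blocks l).length.Partition, p.toWord = blocks l
  refine ⟨⟨l.map (· + 1), by simp, by simp [length_blocks]⟩, ?_⟩
  have hsort : Multiset.sort ↑(l.map (· + 1)) = l.map (· + 1) :=
    List.mergeSort_eq_self _ (hl.map _ fun a b hab => Nat.add_le_add_right hab 1)
  simp [toWord, hsort, List.map_map, Function.comp_def]

end Nat.Partition

theorem growthA_eq_card_partition {n : ℕ} (hn : n ≠ 0) :
    growthA n = Fintype.card n.Partition := by
  let word (p : n.Partition) : { w : List AB // w ∈ langA ∧ w.length = n } :=
    ⟨p.toWord, p.toWord_mem_langA hn, p.length_toWord⟩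
  have hinj : Function.Injective word := fun p q h =>
    Nat.Partition.toWord_injective (congrArg Subtype.val h)
  have hsurj : Function.Surjective word := by
    rintro ⟨w, hw, rfl⟩
    obtain ⟨p, hp⟩ := Nat.Partition.exists_toWord_eq hw
    exact ⟨p, Subtype.ext hp⟩
  rw [← Nat.card_eq_fintype_card]
  exact (Nat.card_eq_of_bijective word ⟨hinj, hsurj⟩).symm

lemma Fin.sum_val_add_two_le {m n : ℕ} (h : (m + 1) * (m + 2) ≤ 2 * n) (S : Finset (Fin m)) :
    ∑ i ∈ S, ((i : ℕ) + 2) ≤ n := by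
  have hgauss : (∑ i ∈ Finset.range m, (i + 2) + 1) * 2 = (m + 2) * (m + 1) := by
    simpa [Finset.sum_range_succ', add_assoc] using Finset.sum_range_id_mul_two (m + 2)
  calc ∑ i ∈ S, ((i : ℕ) + 2) ≤ ∑ i : Fin m, ((i : ℕ) + 2) :=
        Finset.sum_le_sum_of_subset S.subset_univ
    _ = ∑ i ∈ Finset.range m, (i + 2) := Fin.sum_univ_eq_sum_range (· + 2) m
    _ ≤ n := by nlinarith

namespace Nat.Partition

variable {m n : ℕ}

def ofFinset (h : (m + 1) * (m + 2) ≤ 2 * n) (S : Finset (Fin m)) : n.Partition where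
  parts := S.val.map (fun i : Fin m => (i : ℕ) + 2) +
    Multiset.replicate (n - ∑ i ∈ S, ((i : ℕ) + 2)) 1
  parts_pos := by
    intro i hi
    rcases Multiset.mem_add.mp hi with hi | hi
    · obtain ⟨j, -, rfl⟩ := Multiset.mem_map.mp hi; omega
    · rw [Multiset.eq_of_mem_replicate hi]; exact one_pos
  parts_sum := by
    rw [Multiset.sum_add, Multiset.sum_replicate, smul_eq_mul, mul_one, ← Finset.sum_map_val]
    exact Nat.add_sub_cancel' (Fin.sum_val_add_two_le h S)

lemma ofFinset_injective (h : (m + 1) * (m + 2) ≤ 2 * n) : Function.Injective (ofFinset h) := by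
  intro S T hST
  have hlarge : ∀ S,
      (ofFinset h S).parts.filter (2 ≤ ·) = S.val.map (fun i : Fin m => (i : ℕ) + 2) := by
    intro S
    rw [ofFinset, Multiset.filter_add, Multiset.filter_eq_self.mpr (by simp),
      Multiset.filter_eq_nil.mpr fun x hx => by simp [Multiset.eq_of_mem_replicate hx], add_zero]
  have hmap := hlarge S
  rw [hST, hlarge T] at hmap
  have hshift : Function.Injective (fun i : Fin m => (i : ℕ) + 2) := fun a b hab =>
    Fin.ext (by simpa using hab)
  exact Finset.val_injective (Multiset.map_injective hshift hmap.symm)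

theorem two_pow_le_card (h : (m + 1) * (m + 2) ≤ 2 * n) : 2 ^ m ≤ Fintype.card n.Partition := by
  simpa using Fintype.card_le_of_injective _ (ofFinset_injective h)

end Nat.Partition

lemma List.eq_of_forall_getD_zero_eq {L : ℕ} {l₁ l₂ : List ℕ} (h₁ : 0 ∉ l₁) (h₂ : 0 ∉ l₂)
    (hL₁ : l₁.length ≤ L) (hL₂ : l₂.length ≤ L) (h : ∀ j < L, l₁.getD j 0 = l₂.getD j 0) :
    l₁ = l₂ := by
  refine List.ext_getElem? fun j => ?_
  by_cases hj : j < L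
  · have := h j hj
    rw [List.getD_eq_getElem?_getD, List.getD_eq_getElem?_getD] at this
    cases e₁ : l₁[j]? <;> cases e₂ : l₂[j]? <;>
      simp only [e₁, e₂, Option.getD_none, Option.getD_some] at this
    · rfl
    · exact absurd (this ▸ List.mem_of_getElem? e₂) h₂
    · exact absurd (this ▸ List.mem_of_getElem? e₁) h₁
    · rw [this]
  · rw [List.getElem?_eq_none (by omega), List.getElem?_eq_none (by omega)]

namespace Nat.Partition

variable {n : ℕ}

lemma card_filter_lt_le (p : n.Partition) (k : ℕ) :
    (p.parts.filter (k < ·)).card ≤ n / (k + 1) := by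
  rw [Nat.le_div_iff_mul_le k.succ_pos]
  calc (p.parts.filter (k < ·)).card * (k + 1) ≤ (p.parts.filter (k < ·)).sum := by
        simpa [mul_comm] using Multiset.card_nsmul_le_sum (s := p.parts.filter (k < ·))
          (a := k + 1) fun x hx => Multiset.of_mem_filter hx
    _ ≤ p.parts.sum := Nat.le.intro (Multiset.sum_filter_add_sum_filter_not _)
    _ = n := p.parts_sum

def countsAndLargeParts (k : ℕ) (p : n.Partition) : (Fin k → ℕ) × (Fin (n / (k + 1)) → ℕ) :=
  (fun i => p.parts.count ((i : ℕ) + 1), fun j => ((p.parts.filter (k < ·)).sort).getD j 0)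

lemma countsAndLargeParts_injective (k : ℕ) :
    Function.Injective (countsAndLargeParts (n := n) k) := by
  intro p q h
  simp only [countsAndLargeParts, Prod.mk.injEq, funext_iff] at h
  obtain ⟨hsmall, hlarge⟩ := h
  have hsort : (p.parts.filter (k < ·)).sort = (q.parts.filter (k < ·)).sort := by
    refine List.eq_of_forall_getD_zero_eq ?_ ?_ ?_ ?_ fun j hj => hlarge ⟨j, hj⟩
    · simp
    · simp
    · simpa using p.card_filter_lt_le k
    · simpa using q.card_filter_lt_le k
  ext v
  rcases Nat.lt_or_ge k v with hkv | hvk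
  · rw [← Multiset.count_filter_of_pos (p := (k < ·)) hkv,
      ← Multiset.count_filter_of_pos (p := (k < ·)) (s := q.parts) hkv,
      ← Multiset.sort_eq (p.parts.filter (k < ·)) (· ≤ ·), hsort, Multiset.sort_eq]
  · rcases v with _ | v
    · rw [Multiset.count_eq_zero.mpr fun h => (p.parts_pos h).false,
        Multiset.count_eq_zero.mpr fun h => (q.parts_pos h).false]
    · exact hsmall ⟨v, hvk⟩

lemma countsAndLargeParts_mem (k : ℕ) (p : n.Partition) :
    countsAndLargeParts k p ∈ Fintype.piFinset (fun _ => Finset.range (n + 1)) ×ˢ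
      Fintype.piFinset (fun _ => Finset.range (n + 1)) := by
  simp only [countsAndLargeParts, Finset.mem_product, Fintype.mem_piFinset, Finset.mem_range,
    Nat.lt_succ_iff]
  refine ⟨fun i => ?_, fun j => ?_⟩
  · calc p.parts.count ((i : ℕ) + 1) ≤ Multiset.card p.parts := Multiset.count_le_card _ _
      _ ≤ p.parts.sum := by
          simpa using Multiset.card_nsmul_le_sum (a := 1) fun x hx => p.parts_pos hx
      _ = n := p.parts_sum
  · rw [List.getD_eq_getElem?_getD]
    cases e : ((p.parts.filter (k < ·)).sort)[(j : ℕ)]? with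
    | none => exact Nat.zero_le n
    | some v =>
      exact p.le_of_mem_parts (Multiset.mem_of_mem_filter
        ((Multiset.mem_sort _).mp (List.mem_of_getElem? e)))

theorem card_le_pow (k : ℕ) : Fintype.card n.Partition ≤ (n + 1) ^ (k + n / (k + 1)) := by
  have := Finset.card_le_card_of_injOn (s := (Finset.univ : Finset n.Partition))
    (countsAndLargeParts k) (fun p _ => countsAndLargeParts_mem k p)
    (countsAndLargeParts_injective k).injOn
  simpa [pow_add] using this

theorem card_le_pow_two_mul_sqrt (n : ℕ) :
    Fintype.card n.Partition ≤ (n + 1) ^ (2 * n.sqrt) := by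
  refine (card_le_pow n.sqrt).trans (Nat.pow_le_pow_right n.succ_pos ?_)
  have : n / (n.sqrt + 1) < n.sqrt + 1 := (Nat.div_lt_iff_lt_mul n.sqrt.succ_pos).mpr n.lt_succ_sqrt
  omega

theorem two_pow_sqrt_sub_one_le_card {n : ℕ} (hn : n ≠ 0) :
    2 ^ (n.sqrt - 1) ≤ Fintype.card n.Partition := by
  obtain ⟨s, hs⟩ : ∃ s, n.sqrt = s + 1 :=
    Nat.exists_eq_add_one.mpr (Nat.sqrt_pos.mpr (Nat.pos_of_ne_zero hn))
  refine two_pow_le_card ?_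
  have h1 := Nat.sqrt_le n
  have h2 := Nat.sqrt_le_self n
  rw [hs] at h1 h2 ⊢
  rw [Nat.add_sub_cancel]
  nlinarith

end Nat.Partition

lemma eventually_log_lt_mul_sqrt {c : ℝ} (hc : 0 < c) : ∀ᶠ x : ℝ in atTop, log x < c * √x := by
  filter_upwards [(isLittleO_log_rpow_atTop one_half_pos).def (half_pos hc), eventually_gt_atTop 0]
    with x hx hx0
  rw [← Real.sqrt_eq_rpow, Real.norm_of_nonneg (Real.sqrt_nonneg x), Real.norm_eq_abs] at hx
  nlinarith [le_abs_self (log x), Real.sqrt_pos.mpr hx0]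

theorem eventually_rpow_lt_card_partition {α : ℝ} (hα : 0 < α) :
    ∀ᶠ n : ℕ in atTop, (n : ℝ) ^ α < Fintype.card n.Partition := by
  have hlog2 : 0 < log 2 := log_pos one_lt_two
  filter_upwards [tendsto_natCast_atTop_atTop.eventually
      (eventually_log_lt_mul_sqrt (c := log 2 / (2 * α)) (by positivity)),
    eventually_ge_atTop 16] with n hlog hn
  have hsqrt : √(n : ℝ) < n.sqrt + 1 := Real.real_sqrt_lt_nat_sqrt_succ
  have h4 : 4 ≤ √(n : ℝ) := Real.le_sqrt_of_sq_le (by norm_num; exact_mod_cast hn)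
  have hs : ((n.sqrt - 1 : ℕ) : ℝ) = n.sqrt - 1 := Nat.cast_pred (Nat.sqrt_pos.mpr (by omega))
  have hexp : α * log n < (n.sqrt - 1 : ℕ) * log 2 := by
    rw [hs]
    calc α * log n < α * (log 2 / (2 * α) * √n) := mul_lt_mul_of_pos_left hlog hα
      _ = log 2 * √n / 2 := by field_simp
      _ ≤ (n.sqrt - 1) * log 2 := by nlinarith
  calc (n : ℝ) ^ α = exp (α * log n) := by rw [rpow_def_of_pos (by positivity), mul_comm]
    _ < exp ((n.sqrt - 1 : ℕ) * log 2) := exp_lt_exp.mpr hexp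
    _ = 2 ^ (n.sqrt - 1) := by rw [← rpow_natCast, rpow_def_of_pos two_pos, mul_comm]
    _ ≤ Fintype.card n.Partition := by
        exact_mod_cast Nat.Partition.two_pow_sqrt_sub_one_le_card (by omega)

theorem eventually_card_partition_lt_pow {β : ℝ} (hβ : 1 < β) :
    ∀ᶠ n : ℕ in atTop, (Fintype.card n.Partition : ℝ) < β ^ n := by
  have hlogβ : 0 < log β := log_pos hβ
  filter_upwards [tendsto_natCast_atTop_atTop.eventually
      (eventually_log_lt_mul_sqrt (c := log β / 4) (by positivity)),
    eventually_ge_atTop 2] with n hlog hn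
  have hn' : (2 : ℝ) ≤ n := by exact_mod_cast hn
  have hsqrt : (n.sqrt : ℝ) ≤ √(n : ℝ) := Real.nat_sqrt_le_real_sqrt
  have hsq : √(n : ℝ) * √(n : ℝ) = n := Real.mul_self_sqrt (by positivity)
  have hlog1 : log (n + 1) ≤ 2 * log n := by
    rw [← log_rpow (by positivity)]
    exact log_le_log (by positivity) (by norm_num; nlinarith)
  have hexp : (2 * n.sqrt : ℕ) * log (n + 1) < n * log β := by
    push_cast
    have : 0 ≤ log ((n : ℝ) + 1) := log_nonneg (by linarith)
    calc 2 * (n.sqrt : ℝ) * log (n + 1) ≤ 2 * √n * (2 * log n) := by gcongr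
      _ = 4 * √n * log n := by ring
      _ < 4 * √n * (log β / 4 * √n) := by gcongr
      _ = n * log β := by linear_combination log β * hsq
  calc (Fintype.card n.Partition : ℝ) ≤ ((n + 1 : ℕ) : ℝ) ^ (2 * n.sqrt) := by
        exact_mod_cast Nat.Partition.card_le_pow_two_mul_sqrt n
    _ = exp ((2 * n.sqrt : ℕ) * log (n + 1)) := by
        rw [← rpow_natCast, rpow_def_of_pos (by positivity), mul_comm]; push_cast; ring_nf
    _ < exp (n * log β) := exp_lt_exp.mpr hexp
    _ = β ^ n := by rw [← rpow_natCast, rpow_def_of_pos (by linarith), mul_comm]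

/-- The language `A` has intermediate growth: for all real `α, β > 1`
there exists `N` such that for all `n > N`, `n^α < f(n) < β^n`, where `f(n)` is the
number of words of `A` of length `n`. -/
theorem stmt_1 (α β : ℝ) (hα : 1 < α) (hβ : 1 < β) :
    ∃ N : ℕ, ∀ n : ℕ, N < n →
      (n : ℝ) ^ α < (growthA n : ℝ) ∧ (growthA n : ℝ) < β ^ n := by
  obtain ⟨N, hN⟩ := eventually_atTop.mp
    ((eventually_rpow_lt_card_partition (by linarith : 0 < α)).and
      ((eventually_card_partition_lt_pow hβ).and (eventually_ne_atTop 0)))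
  refine ⟨N, fun n hn => ?_⟩
  obtain ⟨hlower, hupper, hn0⟩ := hN n hn.le
  rw [growthA_eq_card_partition hn0]
  exact ⟨hlower, hupper⟩
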